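/- Let A ∈ SL(2,ℝ) be written A = diag(λ₁,λ₁⁻¹)·D·diag(λ₀,λ₀⁻¹) with ‖D‖ ≤ C₀, min(λ₀,λ₁) ≥ λ̄, and ∠(D(1,0)ᵀ,(0,1)ᵀ) > κ > λ̄^{-1/4}. Then, provided λ̄ exceeds a constant depending only on C₀, the operator norm of A satisfies ‖A‖ ≥ c·C₀⁻¹·λ₀·λ₁·κ for some absolute constant c > 0. -/

import Mathlib

/-! The top-left entry of `A` is `λ₁ λ₀ d`, where `d` is the top-left entry of `D`, and `‖A‖`
dominates every entry of `A`. Writing `x = D e₁`, we have `|d| = ‖x‖ sin ∠(x, e₂)`. Since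
`det D = 1`, Hadamard's inequality gives `1 ≤ ‖D e₁‖ ‖D e₂‖ ≤ ‖x‖ C₀`. Projective angles are at
most `π/2`, where Jordan's inequality `sin κ ≥ (2/π) κ` holds, so `c = 2/π` works with any `Λ`. -/

open Real

noncomputable def vnorm (x : Fin 2 → ℝ) : ℝ := Real.sqrt (x 0 ^ 2 + x 1 ^ 2)

noncomputable def opNorm2 (A : Matrix (Fin 2) (Fin 2) ℝ) : ℝ :=
  ⨆ θ : ℝ, vnorm (A.mulVec ![Real.cos θ, Real.sin θ])

noncomputable def argOf (x : Fin 2 → ℝ) : ℝ := Complex.arg (x 0 + x 1 * Complex.I)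

noncomputable def pangle (x y : Fin 2 → ℝ) : ℝ :=
  ‖((argOf x - argOf y : ℝ) : AddCircle (π : ℝ))‖

lemma abs_le_vnorm (x : Fin 2 → ℝ) (i : Fin 2) : |x i| ≤ vnorm x := by
  rw [vnorm, ← Real.sqrt_sq_eq_abs]
  apply Real.sqrt_le_sqrt
  fin_cases i
  · exact le_add_of_nonneg_right (sq_nonneg _)
  · exact le_add_of_nonneg_left (sq_nonneg _)

lemma vnorm_le_abs_add_abs (x : Fin 2 → ℝ) : vnorm x ≤ |x 0| + |x 1| := by
  rw [vnorm, Real.sqrt_le_left (by positivity)]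
  nlinarith [sq_abs (x 0), sq_abs (x 1), abs_nonneg (x 0), abs_nonneg (x 1)]

lemma abs_mulVec_cos_sin_le (A : Matrix (Fin 2) (Fin 2) ℝ) (i : Fin 2) (θ : ℝ) :
    |A.mulVec ![cos θ, sin θ] i| ≤ |A i 0| + |A i 1| := by
  simp only [Matrix.mulVec, dotProduct, Fin.sum_univ_two, Matrix.cons_val_zero,
    Matrix.cons_val_one]
  calc |A i 0 * cos θ + A i 1 * sin θ| ≤ |A i 0| * |cos θ| + |A i 1| * |sin θ| := by
        rw [← abs_mul, ← abs_mul]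
        exact abs_add_le _ _
    _ ≤ |A i 0| * 1 + |A i 1| * 1 := by
        gcongr
        exacts [abs_cos_le_one θ, abs_sin_le_one θ]
    _ = |A i 0| + |A i 1| := by ring

lemma bddAbove_range_vnorm_mulVec (A : Matrix (Fin 2) (Fin 2) ℝ) :
    BddAbove (Set.range fun θ : ℝ => vnorm (A.mulVec ![cos θ, sin θ])) := by
  refine ⟨|A 0 0| + |A 0 1| + (|A 1 0| + |A 1 1|), ?_⟩
  rintro _ ⟨θ, rfl⟩
  exact (vnorm_le_abs_add_abs _).trans
    (add_le_add (abs_mulVec_cos_sin_le A 0 θ) (abs_mulVec_cos_sin_le A 1 θ))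

lemma vnorm_mulVec_le_opNorm2 (A : Matrix (Fin 2) (Fin 2) ℝ) (θ : ℝ) :
    vnorm (A.mulVec ![cos θ, sin θ]) ≤ opNorm2 A :=
  le_ciSup (bddAbove_range_vnorm_mulVec A) θ

lemma vnorm_mulVec_one_zero_le_opNorm2 (A : Matrix (Fin 2) (Fin 2) ℝ) :
    vnorm (A.mulVec ![1, 0]) ≤ opNorm2 A := by
  simpa using vnorm_mulVec_le_opNorm2 A 0

lemma vnorm_mulVec_zero_one_le_opNorm2 (A : Matrix (Fin 2) (Fin 2) ℝ) :
    vnorm (A.mulVec ![0, 1]) ≤ opNorm2 A := by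
  simpa using vnorm_mulVec_le_opNorm2 A (π / 2)

lemma mulVec_one_zero_apply (A : Matrix (Fin 2) (Fin 2) ℝ) (i : Fin 2) :
    A.mulVec ![1, 0] i = A i 0 := by
  simp [Matrix.mulVec, dotProduct]

lemma mulVec_zero_one_apply (A : Matrix (Fin 2) (Fin 2) ℝ) (i : Fin 2) :
    A.mulVec ![0, 1] i = A i 1 := by
  simp [Matrix.mulVec, dotProduct]

lemma abs_apply_le_opNorm2 (A : Matrix (Fin 2) (Fin 2) ℝ) (i j : Fin 2) :
    |A i j| ≤ opNorm2 A := by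
  have h0 := (abs_le_vnorm _ i).trans (vnorm_mulVec_one_zero_le_opNorm2 A)
  have h1 := (abs_le_vnorm _ i).trans (vnorm_mulVec_zero_one_le_opNorm2 A)
  rw [mulVec_one_zero_apply] at h0
  rw [mulVec_zero_one_apply] at h1
  fin_cases j
  exacts [h0, h1]

lemma abs_det_le_vnorm_mul_vnorm (D : Matrix (Fin 2) (Fin 2) ℝ) :
    |D.det| ≤ vnorm (D.mulVec ![1, 0]) * vnorm (D.mulVec ![0, 1]) := by
  have lagrange : (D 0 0 ^ 2 + D 1 0 ^ 2) * (D 0 1 ^ 2 + D 1 1 ^ 2)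
      = D.det ^ 2 + (D 0 0 * D 0 1 + D 1 0 * D 1 1) ^ 2 := by
    rw [Matrix.det_fin_two]; ring
  rw [vnorm, vnorm, ← Real.sqrt_mul (by positivity), ← Real.sqrt_sq_eq_abs]
  apply Real.sqrt_le_sqrt
  simp only [mulVec_one_zero_apply, mulVec_zero_one_apply, lagrange]
  exact le_add_of_nonneg_right (sq_nonneg _)

lemma inv_le_vnorm_mulVec_one_zero {D : Matrix (Fin 2) (Fin 2) ℝ} {C : ℝ} (hdet : D.det = 1)
    (hD : opNorm2 D ≤ C) : C⁻¹ ≤ vnorm (D.mulVec ![1, 0]) := by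
  have hprod := abs_det_le_vnorm_mul_vnorm D
  rw [hdet, abs_one] at hprod
  have hcol := (vnorm_mulVec_zero_one_le_opNorm2 D).trans hD
  have hx : 0 ≤ vnorm (D.mulVec ![1, 0]) := Real.sqrt_nonneg _
  have hC : 0 < C := by nlinarith
  rw [inv_le_iff_one_le_mul₀ hC]
  nlinarith

lemma sin_norm_coe_addCircle_pi (t : ℝ) : sin ‖(t : AddCircle π)‖ = |sin t| := by
  have hle := AddCircle.norm_le_half_period π (x := (t : AddCircle π)) pi_ne_zero
  rw [AddCircle.norm_eq, abs_of_pos pi_pos] at hle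
  rw [AddCircle.norm_eq, ← abs_sin_eq_sin_abs_of_abs_le_pi (by linarith [pi_pos]),
    sin_sub_int_mul_pi, abs_mul, abs_neg_one_zpow, one_mul]

lemma abs_apply_zero_eq_sin_pangle_mul_vnorm (x : Fin 2 → ℝ) :
    |x 0| = sin (pangle x ![0, 1]) * vnorm x := by
  have harg : argOf ![0, 1] = π / 2 := by simp [argOf, Complex.arg_I]
  have hnorm : ‖(x 0 + x 1 * Complex.I : ℂ)‖ = vnorm x := by
    rw [Complex.norm_def, Complex.normSq_apply, vnorm]
    simp [sq]
  rw [pangle, harg, sin_norm_coe_addCircle_pi, sin_sub_pi_div_two, abs_neg, ← hnorm,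
    argOf, mul_comm, ← abs_norm, ← abs_mul, Complex.norm_mul_cos_arg]
  simp

lemma pangle_le_pi_div_two (x y : Fin 2 → ℝ) : pangle x y ≤ π / 2 := by
  simpa [pangle, abs_of_pos pi_pos] using AddCircle.norm_le_half_period π pi_ne_zero

/-- for `A = diag(λ₁,λ₁⁻¹) D diag(λ₀,λ₀⁻¹)` with `D ∈ SL(2,ℝ)`, `‖D‖ ≤ C₀`,
`min(λ₀,λ₁) ≥ λ̄` and `∠(D(1,0)ᵀ,(0,1)ᵀ) > κ > λ̄^(-1/4)`, provided `λ̄` exceeds a constant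
depending only on `C₀`, there is an absolute constant `c > 0` with
`‖A‖ ≥ c C₀⁻¹ λ₀ λ₁ κ`. -/
theorem stmt_3 :
    ∃ c : ℝ, 0 < c ∧ ∀ C₀ : ℝ, 1 ≤ C₀ → ∃ Λ : ℝ, 0 < Λ ∧
      ∀ lam lam0 lam1 κ : ℝ, ∀ D : Matrix (Fin 2) (Fin 2) ℝ,
        Λ ≤ lam → lam ≤ lam0 → lam ≤ lam1 →
        D.det = 1 → opNorm2 D ≤ C₀ →
        0 < κ → κ < 1 → κ > lam ^ (-(1/4 : ℝ)) →
        pangle (D.mulVec ![1, 0]) ![0, 1] > κ →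
        opNorm2 ((!![lam1, 0; 0, lam1⁻¹] : Matrix (Fin 2) (Fin 2) ℝ) * D *
            !![lam0, 0; 0, lam0⁻¹]) ≥ c * C₀⁻¹ * lam0 * lam1 * κ := by
  refine ⟨2 / π, by positivity, fun C₀ _ => ⟨1, one_pos, ?_⟩⟩
  intro lam lam0 lam1 κ D hΛ h0 h1 hdet hD hκ _ _ hangle
  have hangle_le := pangle_le_pi_div_two (D.mulVec ![1, 0]) ![0, 1]
  have hjordan : 2 / π * κ ≤ sin (pangle (D.mulVec ![1, 0]) ![0, 1]) :=
    (mul_le_sin hκ.le (by linarith)).trans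
      (sin_le_sin_of_le_of_le_pi_div_two (by linarith [pi_pos]) hangle_le hangle.le)
  have hD00 : 2 / π * κ * C₀⁻¹ ≤ |D 0 0| := by
    rw [← mulVec_one_zero_apply D 0, abs_apply_zero_eq_sin_pangle_mul_vnorm]
    exact mul_le_mul hjordan (inv_le_vnorm_mulVec_one_zero hdet hD) (by positivity)
      (hjordan.trans' (by positivity))
  have hlam0 : 0 < lam0 := by linarith
  have hlam1 : 0 < lam1 := by linarith
  have hentry : ((!![lam1, 0; 0, lam1⁻¹] : Matrix (Fin 2) (Fin 2) ℝ) * D *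
      !![lam0, 0; 0, lam0⁻¹]) 0 0 = lam1 * D 0 0 * lam0 := by
    simp [Matrix.mul_apply, Matrix.vecMul, dotProduct]
  calc 2 / π * C₀⁻¹ * lam0 * lam1 * κ = lam1 * lam0 * (2 / π * κ * C₀⁻¹) := by ring
    _ ≤ lam1 * lam0 * |D 0 0| := by gcongr
    _ = |lam1 * D 0 0 * lam0| := by rw [abs_mul, abs_mul, abs_of_pos hlam0, abs_of_pos hlam1]; ring
    _ ≤ _ := hentry ▸ abs_apply_le_opNorm2 _ 0 0
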